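/- For n ≥ 2, the number of strongly 312-avoiding permutations of length n that end in the entry 1 equals ⌊n/2⌋; for n = 1 it equals 1. -/
import Mathlib

def Avoids312 {n : ℕ} (p : Equiv.Perm (Fin n)) : Prop :=
  ¬ ∃ a b c : Fin n, a < b ∧ b < c ∧ p b < p c ∧ p c < p a

def StronglyAvoids312 {n : ℕ} (p : Equiv.Perm (Fin n)) : Prop :=
  Avoids312 p ∧ Avoids312 (p * p)

def pmFun (n m : ℕ) : Fin n → Fin n := fun x =>
  if h : x.val < n - m then ⟨m + x.val, by omega⟩
  else ⟨n - 1 - x.val, by have := x.isLt; omega⟩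

lemma pmFun_val (n m : ℕ) (hm : m < n) (x : Fin n) :
    (pmFun n m x).val = if x.val < n - m then m + x.val else n - 1 - x.val := by
  unfold pmFun; split_ifs <;> rfl

lemma pmFun_inj (n m : ℕ) (hm : m < n) : Function.Injective (pmFun n m) := by
  intro a b hab
  have h1 := pmFun_val n m hm a
  have h2 := pmFun_val n m hm b
  rw [hab] at h1
  have ha := a.isLt; have hb := b.isLt
  apply Fin.ext
  rw [h1] at h2
  split_ifs at h2 <;> omega

noncomputable def pmPerm (n m : ℕ) (hm : m < n) : Equiv.Perm (Fin n) :=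
  Equiv.ofBijective _ (Finite.injective_iff_bijective.mp (pmFun_inj n m hm))

lemma pmPerm_val (n m : ℕ) (hm : m < n) (x : Fin n) :
    (pmPerm n m hm x).val = if x.val < n - m then m + x.val else n - 1 - x.val :=
  pmFun_val n m hm x

lemma pmPerm_good (n m : ℕ) (hm : m < n) (h2 : n ≤ 2 * m) (hn : 1 ≤ n) :
    StronglyAvoids312 (pmPerm n m hm) ∧ ((pmPerm n m hm) ⟨n - 1, by omega⟩ : ℕ) = 0 := by
  refine ⟨⟨?_, ?_⟩, ?_⟩
  · rintro ⟨a, b, c, hab, hbc, h1, h2'⟩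
    have va := pmPerm_val n m hm a
    have vb := pmPerm_val n m hm b
    have vc := pmPerm_val n m hm c
    have hab' : a.val < b.val := hab
    have hbc' : b.val < c.val := hbc
    have h1' : ((pmPerm n m hm) b).val < ((pmPerm n m hm) c).val := h1
    have h2'' : ((pmPerm n m hm) c).val < ((pmPerm n m hm) a).val := h2'
    have hc := c.isLt
    split_ifs at va vb vc <;> omega
  · rintro ⟨a, b, c, hab, hbc, h1, h2'⟩
    have hq : ∀ x : Fin n, ((pmPerm n m hm * pmPerm n m hm) x).val =
        if (if x.val < n - m then m + x.val else n - 1 - x.val) < n - m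
        then m + (if x.val < n - m then m + x.val else n - 1 - x.val)
        else n - 1 - (if x.val < n - m then m + x.val else n - 1 - x.val) := by
      intro x
      have : (pmPerm n m hm * pmPerm n m hm) x = pmPerm n m hm (pmPerm n m hm x) := rfl
      rw [this, pmPerm_val n m hm, pmPerm_val n m hm x]
    have va := hq a; have vb := hq b; have vc := hq c
    have hab' : a.val < b.val := hab
    have hbc' : b.val < c.val := hbc
    have h1' : ((pmPerm n m hm * pmPerm n m hm) b).val < ((pmPerm n m hm * pmPerm n m hm) c).val := h1
    have h2'' : ((pmPerm n m hm * pmPerm n m hm) c).val < ((pmPerm n m hm * pmPerm n m hm) a).val := h2'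
    have hc := c.isLt; have ha := a.isLt; have hb := b.isLt
    split_ifs at va vb vc <;> omega
  · have h := pmPerm_val n m hm ⟨n - 1, by omega⟩
    simp only [Fin.val_mk] at h ⊢
    rw [h]
    split_ifs <;> omega

lemma card_filter_lt_perm {n m : ℕ} (hm : m < n) (f : Equiv.Perm (Fin n)) :
    (Finset.univ.filter fun x => (f x).val < m).card = m := by
  have himg : (Finset.univ.filter fun x => (f x).val < m)
      = Finset.image f.symm (Finset.Iio ⟨m, hm⟩) := by
    ext x
    simp only [Finset.mem_filter, Finset.mem_univ, true_and, Finset.mem_image,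
      Finset.mem_Iio, Fin.lt_def]
    constructor
    · intro h
      exact ⟨f x, h, f.symm_apply_apply x⟩
    · rintro ⟨y, hy, rfl⟩
      simpa using hy
  rw [himg, Finset.card_image_of_injective _ f.symm.injective, Fin.card_Iio]

section Main

variable {n : ℕ} (p : Equiv.Perm (Fin n)) (m : ℕ) (z l : Fin n)

-- L1 : small values appear in decreasing order
lemma myL1 (hp : Avoids312 p) (hz : z.val = 0) (hm : (p z).val = m) :
    ∀ i j : Fin n, i.val < j.val → (p i).val < m → (p j).val < m →
      (p j).val < (p i).val := by
  intro i j hij hi hj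
  by_contra hcon
  have hne : i ≠ j := fun e => by rw [e] at hij; omega
  have hpij : (p i).val < (p j).val := by
    have h1 : p i ≠ p j := fun e => hne (p.injective e)
    have h2 : (p i).val ≠ (p j).val := fun e => h1 (Fin.ext e)
    omega
  have hi0 : 0 < i.val := by
    rcases Nat.eq_zero_or_pos i.val with h0 | h0
    · exfalso
      have : i = z := Fin.ext (by omega)
      rw [this] at hi
      omega
    · exact h0
  exact hp ⟨z, i, j, Fin.lt_def.mpr (by omega), Fin.lt_def.mpr hij,
    Fin.lt_def.mpr hpij, Fin.lt_def.mpr (by omega)⟩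

-- F1 : q x < m iff x < m
lemma myF1 (hn : 2 ≤ n) (hq : Avoids312 (p * p)) (hz : z.val = 0) (hl : l.val = n - 1)
    (hm : (p z).val = m) (h0 : (p l).val = 0) (hmlt : m < n) :
    ∀ x : Fin n, x.val < m ↔ ((p * p) x).val < m := by
  have hpl : p l = z := Fin.ext (by omega)
  have hqlast : ((p * p) l).val = m := by
    show (p (p l)).val = m
    rw [hpl, hm]
  have hO : ∀ a b : Fin n, m < ((p * p) a).val → ((p * p) b).val < m → b.val < a.val := by
    intro a b ha hb
    by_contra hcon
    push_neg at hcon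
    have hne : a.val ≠ b.val := by
      intro e
      have : a = b := Fin.ext e
      rw [this] at ha
      omega
    have hab : a.val < b.val := by omega
    have hbl : b.val < n - 1 := by
      have hne2 : b ≠ l := by
        intro e
        rw [e, hqlast] at hb
        omega
      have h3 : b.val ≠ l.val := fun e => hne2 (Fin.ext e)
      have := b.isLt
      omega
    exact hq ⟨a, b, l, Fin.lt_def.mpr hab, Fin.lt_def.mpr (by omega),
      Fin.lt_def.mpr (by omega), Fin.lt_def.mpr (by omega)⟩
  have hcardB : (Finset.univ.filter fun x => ((p * p) x).val < m).card = m :=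
    card_filter_lt_perm hmlt (p * p)
  set B := Finset.univ.filter fun x => ((p * p) x).val < m with hB
  have dc : ∀ x ∈ B, ∀ y : Fin n, y.val < x.val → y ∈ B := by
    intro x hx y hyx
    by_contra hy
    rw [hB, Finset.mem_filter] at hy hx
    push_neg at hy
    have hy' : m ≤ ((p * p) y).val := hy (Finset.mem_univ y)
    rcases Nat.eq_or_lt_of_le hy' with he | hgt
    · have h1 : (p * p) y = (p * p) l := Fin.ext (by omega)
      have h2 : y = l := (p * p).injective h1
      have h3 : y.val = n - 1 := by rw [h2]; exact hl
      have := x.isLt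
      omega
    · have := hO y x hgt hx.2
      omega
  intro x
  constructor
  · intro hx
    by_contra hxB
    have hxB' : x ∉ B := by
      rw [hB, Finset.mem_filter]
      push_neg
      intro _
      omega
    have hsub : B ⊆ Finset.Iio x := by
      intro b hb
      rw [Finset.mem_Iio]
      by_contra hbx
      push_neg at hbx
      rcases Nat.eq_or_lt_of_le (Fin.le_def.mp hbx) with he | hgt
      · exact hxB' (by rwa [show x = b from Fin.ext he])
      · exact hxB' (dc b hb x hgt)
    have := Finset.card_le_card hsub
    rw [hcardB, Fin.card_Iio] at this
    omega
  · intro hqx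
    by_contra hx
    push_neg at hx
    have hxB : x ∈ B := by
      rw [hB, Finset.mem_filter]
      exact ⟨Finset.mem_univ x, hqx⟩
    have hsub : Finset.Iic x ⊆ B := by
      intro y hy
      rw [Finset.mem_Iic] at hy
      rcases Nat.eq_or_lt_of_le (Fin.le_def.mp hy) with he | hgt
      · rwa [show y = x from Fin.ext he]
      · exact dc x hxB y hgt
    have := Finset.card_le_card hsub
    rw [hcardB, Fin.card_Iic] at this
    omega

-- SD : positions >= m carry small values
lemma mySD (hn : 2 ≤ n) (hp : Avoids312 p) (hq : Avoids312 (p * p)) (hz : z.val = 0)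
    (hl : l.val = n - 1) (hm : (p z).val = m) (h0 : (p l).val = 0) (hmlt : m < n)
    (hm1 : 1 ≤ m) :
    ∀ x : Fin n, m ≤ x.val → (p x).val < m := by
  have F1 := myF1 p m z l hn hq hz hl hm h0 hmlt
  have hpm : ∀ y : Fin n, y.val = m → (p y).val < m := by
    intro y hy
    have h1 := (F1 z).mp (by omega)
    have h2 : ((p * p) z).val = (p y).val := by
      show (p (p z)).val = _
      have : p z = y := Fin.ext (by omega)
      rw [this]
    omega
  intro x0 hx0
  by_contra hcon
  push_neg at hcon
  obtain ⟨t, hpt⟩ : ∃ t : Fin n, (p t).val = n - 1 :=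
    ⟨p.symm ⟨n - 1, by omega⟩, by rw [Equiv.apply_symm_apply]⟩
  have htm : t.val < m := by
    by_contra htm
    push_neg at htm
    have hqt : ((p * p) t).val = 0 := by
      show (p (p t)).val = 0
      have : p t = l := Fin.ext (by omega)
      rw [this, h0]
    have := (F1 t).mpr (by omega)
    omega
  have hx0m : m < x0.val := by
    rcases Nat.eq_or_lt_of_le hx0 with he | hgt
    · exfalso
      have := hpm x0 he.symm
      omega
    · exact hgt
  have hpx0 : (p x0).val < n - 1 := by
    have h1 : x0 ≠ t := by
      intro e
      rw [e] at hx0m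
      omega
    have h2 : p x0 ≠ p t := fun e => h1 (p.injective e)
    have h3 : (p x0).val ≠ n - 1 := fun e => h2 (Fin.ext (by omega))
    have := (p x0).isLt
    omega
  obtain ⟨w, hw⟩ : ∃ w : Fin n, w.val = m := ⟨⟨m, hmlt⟩, rfl⟩
  have hpw : (p w).val < m := hpm w hw
  exact hp ⟨t, w, x0, Fin.lt_def.mpr (by omega), Fin.lt_def.mpr (by omega),
    Fin.lt_def.mpr (by omega), Fin.lt_def.mpr (by omega)⟩

-- 2m >= n
lemma myhm2 (hn : 2 ≤ n) (hp : Avoids312 p) (hq : Avoids312 (p * p)) (hz : z.val = 0)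
    (hl : l.val = n - 1) (hm : (p z).val = m) (h0 : (p l).val = 0) (hmlt : m < n)
    (hm1 : 1 ≤ m) : n ≤ 2 * m := by
  have SD := mySD p m z l hn hp hq hz hl hm h0 hmlt hm1
  have hsub : (Finset.Ici (⟨m, hmlt⟩ : Fin n)) ⊆
      Finset.univ.filter fun y => (p y).val < m := by
    intro y hy
    rw [Finset.mem_Ici] at hy
    rw [Finset.mem_filter]
    have : m ≤ y.val := Fin.le_def.mp hy
    exact ⟨Finset.mem_univ y, SD y this⟩
  have hcle := Finset.card_le_card hsub
  rw [Fin.card_Ici, card_filter_lt_perm hmlt p] at hcle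
  simp only [Fin.val_mk] at hcle
  omega

-- Fact D : p x is small iff x >= n - m
lemma myFD (hn : 2 ≤ n) (hp : Avoids312 p) (hq : Avoids312 (p * p)) (hz : z.val = 0)
    (hl : l.val = n - 1) (hm : (p z).val = m) (h0 : (p l).val = 0) (hmlt : m < n)
    (hm1 : 1 ≤ m) :
    ∀ x : Fin n, (p x).val < m ↔ n - m ≤ x.val := by
  have F1 := myF1 p m z l hn hq hz hl hm h0 hmlt
  have SD := mySD p m z l hn hp hq hz hl hm h0 hmlt hm1
  have hm2 : n ≤ 2 * m := myhm2 p m z l hn hp hq hz hl hm h0 hmlt hm1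
  -- T : the set S0, closed under p
  set T : Finset (Fin n) := Finset.univ.filter fun y => y.val < m ∧ (p y).val < m with hT
  have hTimg : T.image p = T := by
    apply Finset.eq_of_subset_of_card_le
    · intro y hy
      rw [Finset.mem_image] at hy
      obtain ⟨w, hw, rfl⟩ := hy
      rw [hT, Finset.mem_filter] at hw ⊢
      exact ⟨Finset.mem_univ _, hw.2.2, (F1 w).mp hw.2.1⟩
    · rw [Finset.card_image_of_injective _ p.injective]
  -- Step 5
  have S5 : ∀ x y : Fin n, x.val < m → y.val < m → (p x).val < m → m ≤ (p y).val →
      y.val < x.val := by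
    intro x y hxm hym hpx hpy
    by_contra hcon
    push_neg at hcon
    have hne : x.val ≠ y.val := by
      intro e
      have : x = y := Fin.ext e
      rw [this] at hpx
      omega
    have hxy : x.val < y.val := by omega
    have hxT : x ∈ T := by
      rw [hT, Finset.mem_filter]
      exact ⟨Finset.mem_univ x, hxm, hpx⟩
    have hxT' : x ∈ T.image p := by rw [hTimg]; exact hxT
    rw [Finset.mem_image] at hxT'
    obtain ⟨v, hvT, hvx⟩ := hxT'
    rw [hT, Finset.mem_filter] at hvT
    obtain ⟨w, hpw⟩ : ∃ w : Fin n, p w = y := ⟨p.symm y, p.apply_symm_apply y⟩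
    have hwm : m ≤ w.val := by
      by_contra hwm
      push_neg at hwm
      by_cases hc : (p w).val < m
      · have hwT : w ∈ T := by
          rw [hT, Finset.mem_filter]
          exact ⟨Finset.mem_univ w, hwm, hc⟩
        have hmem : p w ∈ T := by
          rw [← hTimg, Finset.mem_image]
          exact ⟨w, hwT, rfl⟩
        rw [hpw, hT, Finset.mem_filter] at hmem
        omega
      · rw [hpw] at hc
        omega
    have hv0 : 0 < v.val := by
      rcases Nat.eq_zero_or_pos v.val with hv | hv
      · exfalso
        have he : v = z := Fin.ext (by omega)
        rw [he] at hvx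
        have : m = x.val := by rw [← hvx, hm]
        omega
      · exact hv
    have hvxval : (p v).val = x.val := by rw [hvx]
    have hpwval : (p w).val = y.val := by rw [hpw]
    exact hp ⟨z, v, w, Fin.lt_def.mpr (by omega), Fin.lt_def.mpr (by omega),
      Fin.lt_def.mpr (by omega), Fin.lt_def.mpr (by omega)⟩
  intro x
  constructor
  · intro hx
    by_contra hxc
    push_neg at hxc
    have hxm : x.val < m := by omega
    have hsub : (Finset.univ.filter fun y => m ≤ (p y).val) ⊆ Finset.Iio x := by
      intro y hy
      rw [Finset.mem_filter] at hy
      rw [Finset.mem_Iio, Fin.lt_def]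
      have hym : y.val < m := by
        by_contra hym
        push_neg at hym
        have := SD y hym
        omega
      exact S5 x y hxm hym hx hy.2
    have hcard : (Finset.univ.filter fun y => m ≤ (p y).val).card = n - m := by
      have h1 : (Finset.univ.filter fun y => m ≤ (p y).val)
          = Finset.univ.filter fun y => ¬ (p y).val < m := by
        apply Finset.filter_congr
        intro y _
        exact not_lt.symm
      rw [h1, Finset.filter_not, Finset.card_sdiff_of_subset (Finset.filter_subset _ _),
        card_filter_lt_perm hmlt p, Finset.card_univ, Fintype.card_fin]
    have := Finset.card_le_card hsub
    rw [hcard, Fin.card_Iio] at this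
    omega
  · intro hx
    by_contra hcon
    push_neg at hcon
    have hxm : x.val < m := by
      by_contra hxm
      push_neg at hxm
      have := SD x hxm
      omega
    have hsub : (Finset.univ.filter fun y => (p y).val < m) ⊆ Finset.Ioi x := by
      intro y hy
      rw [Finset.mem_filter] at hy
      rw [Finset.mem_Ioi, Fin.lt_def]
      by_cases hym : y.val < m
      · exact S5 y x hym hxm hy.2 hcon
      · push_neg at hym
        omega
    have := Finset.card_le_card hsub
    rw [card_filter_lt_perm hmlt p, Fin.card_Ioi] at this
    have := x.isLt
    omega

-- Tail : p x = n - 1 - x for x >= n - m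
lemma myTail (hn : 2 ≤ n) (hp : Avoids312 p) (hq : Avoids312 (p * p)) (hz : z.val = 0)
    (hl : l.val = n - 1) (hm : (p z).val = m) (h0 : (p l).val = 0) (hmlt : m < n)
    (hm1 : 1 ≤ m) :
    ∀ x : Fin n, n - m ≤ x.val → (p x).val = n - 1 - x.val := by
  have L1 := myL1 p m z hp hz hm
  have FD := myFD p m z l hn hp hq hz hl hm h0 hmlt hm1
  have Tail : ∀ k, k < m → ∀ j, j ≤ k → ∀ x : Fin n, x.val = n - 1 - j →
      (p x).val = j := by
    intro k
    induction k with
    | zero =>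
      intro _ j hj x hx
      have hj0 : j = 0 := by omega
      subst hj0
      have he : x = l := Fin.ext (by omega)
      rw [he, h0]
    | succ k IH =>
      intro hk1 j hj x hx
      rcases Nat.lt_or_ge j (k + 1) with hjk | hjk
      · exact IH (by omega) j (by omega) x hx
      · have hj1 : j = k + 1 := by omega
        subst hj1
        have hxval : x.val = n - 1 - (k + 1) := hx
        have hvs : (p x).val < m := (FD x).mpr (by omega)
        have hge : ¬ (p x).val ≤ k := by
          intro hle
          obtain ⟨y, hy⟩ : ∃ y : Fin n, y.val = n - 1 - (p x).val :=
            ⟨⟨n - 1 - (p x).val, by omega⟩, rfl⟩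
          have h2 := IH (by omega) (p x).val (by omega) y hy
          have h3 : p y = p x := Fin.ext (by omega)
          have h4 := p.injective h3
          have h5 : y.val = x.val := by rw [h4]
          omega
        have hle : (p x).val ≤ k + 1 := by
          by_contra hgt
          push_neg at hgt
          obtain ⟨u, hpu⟩ : ∃ u : Fin n, (p u).val = k + 1 :=
            ⟨p.symm ⟨k + 1, by omega⟩, by rw [Equiv.apply_symm_apply]⟩
          have hu : n - m ≤ u.val := (FD u).mp (by omega)
          have hult : u.val < n - 1 - (k + 1) := by
            by_contra hcon2
            push_neg at hcon2
            rcases Nat.eq_or_lt_of_le hcon2 with he | hgt2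
            · have : u = x := Fin.ext (by omega)
              rw [this] at hpu
              omega
            · have hj2 : n - 1 - u.val ≤ k := by have := u.isLt; omega
              have h2 := IH (by omega) (n - 1 - u.val) hj2 u
                (by have := u.isLt; omega)
              omega
          have := L1 u x (by omega) (by omega) hvs
          omega
        omega
  intro x hx
  have hk : n - 1 - x.val < m := by have := x.isLt; omega
  exact Tail (n - 1 - x.val) hk (n - 1 - x.val) le_rfl x (by have := x.isLt; omega)

-- Head : p x = m + x for x < n - m
lemma myHead (hn : 2 ≤ n) (hp : Avoids312 p) (hq : Avoids312 (p * p)) (hz : z.val = 0)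
    (hl : l.val = n - 1) (hm : (p z).val = m) (h0 : (p l).val = 0) (hmlt : m < n)
    (hm1 : 1 ≤ m) :
    ∀ x : Fin n, x.val < n - m → (p x).val = m + x.val := by
  have FD := myFD p m z l hn hp hq hz hl hm h0 hmlt hm1
  have hm2 : n ≤ 2 * m := myhm2 p m z l hn hp hq hz hl hm h0 hmlt hm1
  have TailX := myTail p m z l hn hp hq hz hl hm h0 hmlt hm1
  have Mono : ∀ b c : Fin n, b.val < c.val → c.val < n - m → (p b).val < (p c).val := by
    intro b c hbc hc
    have hpb : m ≤ (p b).val := by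
      by_contra h
      push_neg at h
      have := (FD b).mp h
      omega
    have hpc : m ≤ (p c).val := by
      by_contra h
      push_neg at h
      have := (FD c).mp h
      omega
    by_contra hcon
    push_neg at hcon
    have hne : (p b).val ≠ (p c).val := by
      intro e
      have : b = c := p.injective (Fin.ext e)
      rw [this] at hbc
      omega
    have hlt : (p c).val < (p b).val := by omega
    have hb0 : 0 < b.val := by
      rcases Nat.eq_zero_or_pos b.val with hb | hb
      · exfalso
        have : b = z := Fin.ext (by omega)
        rw [this, hm] at hlt
        omega
      · exact hb
    have hpcm : m < (p c).val := by
      rcases Nat.eq_or_lt_of_le hpc with he | hgt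
      · exfalso
        have h1 : p c = p z := Fin.ext (by omega)
        have h2 : c = z := p.injective h1
        have h3 : c.val = 0 := by rw [h2, hz]
        omega
      · exact hgt
    have hqb : ((p * p) b).val = n - 1 - (p b).val := TailX (p b) (by omega)
    have hqc : ((p * p) c).val = n - 1 - (p c).val := TailX (p c) (by omega)
    have hq0 : ((p * p) z).val = n - 1 - m := by
      show (p (p z)).val = n - 1 - m
      have h2 := TailX (p z) (by omega)
      omega
    have hpbn := (p b).isLt
    exact hq ⟨z, b, c, Fin.lt_def.mpr (by omega), Fin.lt_def.mpr (by omega),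
      Fin.lt_def.mpr (by omega), Fin.lt_def.mpr (by omega)⟩
  have HeadX : ∀ k, ∀ x : Fin n, x.val = k → x.val < n - m → (p x).val = m + x.val := by
    intro k
    induction k using Nat.strong_induction_on with
    | _ k IH =>
      intro x hxk hx
      obtain ⟨v, hpv⟩ : ∃ v : Fin n, (p v).val = m + k :=
        ⟨p.symm ⟨m + k, by omega⟩, by rw [Equiv.apply_symm_apply]⟩
      have hv : v.val < n - m := by
        by_contra h
        push_neg at h
        have := (FD v).mpr h
        omega
      rcases lt_trichotomy v.val k with h | h | h
      · have := IH v.val h v rfl (by omega)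
        omega
      · have he : v = x := Fin.ext (by omega)
        rw [he] at hpv
        omega
      · have hmono := Mono x v (by omega) hv
        have hpx : m ≤ (p x).val := by
          by_contra h2
          push_neg at h2
          have := (FD x).mp h2
          omega
        obtain ⟨u, hu⟩ : ∃ u : Fin n, u.val = (p x).val - m :=
          ⟨⟨(p x).val - m, by omega⟩, rfl⟩
        have h2 := IH ((p x).val - m) (by omega) u hu (by omega)
        have h3 : p u = p x := Fin.ext (by omega)
        have h4 := p.injective h3
        have h5 : u.val = x.val := by rw [h4]
        omega
  intro x hx
  exact HeadX x.val x rfl hx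

end Main


lemma classification {n : ℕ} (hn : 2 ≤ n) (p : Equiv.Perm (Fin n))
    (hp : Avoids312 p) (hq : Avoids312 (p * p))
    (h0 : (p ⟨n - 1, by omega⟩).val = 0) :
    n ≤ 2 * (p ⟨0, by omega⟩).val ∧
      p = pmPerm n (p ⟨0, by omega⟩).val (p ⟨0, by omega⟩).isLt := by
  have hz : ((⟨0, by omega⟩ : Fin n)).val = 0 := rfl
  have hl : ((⟨n - 1, by omega⟩ : Fin n)).val = n - 1 := rfl
  have hmlt : (p ⟨0, by omega⟩).val < n := (p ⟨0, by omega⟩).isLt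
  have hm1 : 1 ≤ (p ⟨0, by omega⟩).val := by
    by_contra h
    push_neg at h
    have he : p ⟨0, by omega⟩ = p ⟨n - 1, by omega⟩ := Fin.ext (by omega)
    have h2 := p.injective he
    have h3 : (0 : ℕ) = n - 1 := congrArg Fin.val h2
    omega
  have hm2 := myhm2 p (p ⟨0, by omega⟩).val ⟨0, by omega⟩ ⟨n - 1, by omega⟩
    hn hp hq hz hl rfl h0 hmlt hm1
  refine ⟨hm2, ?_⟩
  apply Equiv.ext
  intro x
  apply Fin.ext
  rw [pmPerm_val]
  by_cases hx : x.val < n - (p ⟨0, by omega⟩).val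
  · rw [if_pos hx]
    exact myHead p (p ⟨0, by omega⟩).val ⟨0, by omega⟩ ⟨n - 1, by omega⟩
      hn hp hq hz hl rfl h0 hmlt hm1 x hx
  · rw [if_neg hx]
    exact myTail p (p ⟨0, by omega⟩).val ⟨0, by omega⟩ ⟨n - 1, by omega⟩
      hn hp hq hz hl rfl h0 hmlt hm1 x (by omega)

noncomputable def mainEquiv (n : ℕ) (hn : 2 ≤ n) :
    {p : Equiv.Perm (Fin n) //
        StronglyAvoids312 p ∧ (p ⟨n - 1, by omega⟩ : ℕ) = 0} ≃
      {m : Fin n // n ≤ 2 * m.val} where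
  toFun := fun ⟨p, hsa, hend⟩ => ⟨p ⟨0, by omega⟩,
    (classification hn p hsa.1 hsa.2 hend).1⟩
  invFun := fun ⟨m, hm⟩ => ⟨pmPerm n m.val m.isLt,
    by
      have h := pmPerm_good n m.val m.isLt hm (by omega)
      exact ⟨h.1, h.2⟩⟩
  left_inv := by
    rintro ⟨p, hsa, hend⟩
    apply Subtype.ext
    exact ((classification hn p hsa.1 hsa.2 hend).2).symm
  right_inv := by
    rintro ⟨m, hm⟩
    apply Subtype.ext
    apply Fin.ext
    have h := pmPerm_val n m.val m.isLt ⟨0, by omega⟩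
    rw [h]
    have : (0 : ℕ) < n - m.val := by have := m.isLt; omega
    rw [if_pos this]
    rfl

/-- The number of strongly 312-avoiding permutations of length n ending in 1 is
⌊n/2⌋ for n ≥ 2, and 1 for n = 1. -/
theorem count_strongly_avoiding_ending_in_one (n : ℕ) (hn : 1 ≤ n) :
    Nat.card {p : Equiv.Perm (Fin n) //
        StronglyAvoids312 p ∧ (p ⟨n - 1, by omega⟩ : ℕ) = 0} =
      if n = 1 then 1 else n / 2 := by
  rcases eq_or_lt_of_le hn with h1 | h2
  · -- n = 1
    subst h1
    rw [if_pos rfl]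
    rw [Nat.card_eq_one_iff_unique]
    constructor
    · constructor
      rintro ⟨p1, _⟩ ⟨p2, _⟩
      apply Subtype.ext
      apply Equiv.ext
      intro x
      exact Subsingleton.elim _ _
    · refine ⟨⟨1, ⟨?_, ?_⟩, rfl⟩⟩
      · rintro ⟨a, b, c, hab, hbc, -, -⟩
        have h1 : a.val < b.val := hab
        have h2 : b.val < c.val := hbc
        have := c.isLt
        omega
      · rintro ⟨a, b, c, hab, hbc, -, -⟩
        have h1 : a.val < b.val := hab
        have h2 : b.val < c.val := hbc
        have := c.isLt
        omega
  · -- n ≥ 2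
    have hn2 : 2 ≤ n := h2
    rw [if_neg (by omega)]
    rw [Nat.card_congr (mainEquiv n hn2)]
    rw [Nat.card_eq_fintype_card, Fintype.card_subtype]
    have he : (Finset.univ.filter fun m : Fin n => n ≤ 2 * m.val)
        = Finset.Ici (⟨(n + 1) / 2, by omega⟩ : Fin n) := by
      ext x
      simp only [Finset.mem_filter, Finset.mem_univ, true_and, Finset.mem_Ici,
        Fin.le_def, Fin.val_mk]
      omega
    rw [he, Fin.card_Ici]
    simp only [Fin.val_mk]
    omega
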